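/- With Ĩ_p = Ĩ_n · s_{n-p}(a_1/(2nμ),...,a_κ/(2nμ)), the Fujiwara bound λ̃ = 2 max_{1≤p≤n} (Ĩ_p/Ĩ_0)^{1/p} equals 4nμ · s_{n-1}(a_1,...,a_κ)/s_n(a_1,...,a_κ). -/

import Mathlib

/-!
With `c = 2nμ`, the ratio `Ĩ_p / Ĩ_0` equals `c^p · s_{n-p}(a) / s_n(a)`, so the claim is that
the maximum over `p` of `(s_{n-p} / s_n)^{1/p}` is attained at `p = 1`. The elementary symmetric
functions of nonnegative reals form a log-concave sequence without internal zeros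
(`s_k^2 ≥ s_{k-1} s_{k+1}`, proved by adjoining one variable at a time), so the ratios
`s_{k-1} / s_k` increase with `k` and `s_{n-p} / s_n`, a product of `p` of them, is at most
`(s_{n-1} / s_n)^p`.
-/

open Finset

/-- the `j`-th elementary symmetric polynomial of `x 1, ..., x κ`. -/
noncomputable def esymmEval (κ : ℕ) (x : Fin κ → ℝ) (j : ℕ) : ℝ :=
  ∑ A ∈ Finset.powersetCard j (Finset.univ : Finset (Fin κ)), ∏ i ∈ A, x i

structure IsLogConcaveSeq (f : ℕ → ℝ) : Prop where
  nonneg : ∀ k, 0 ≤ f k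
  mul_le_sq : ∀ k, f k * f (k + 2) ≤ f (k + 1) ^ 2
  succ_eq_zero : ∀ k, f k = 0 → f (k + 1) = 0

namespace IsLogConcaveSeq

variable {f : ℕ → ℝ}

theorem mul_succ_le (hf : IsLogConcaveSeq f) {j k : ℕ} (hjk : j ≤ k) :
    f j * f (k + 1) ≤ f (j + 1) * f k := by
  induction k, hjk using Nat.le_induction with
  | base => rw [mul_comm]
  | succ k _ ih =>
    rcases (hf.nonneg (k + 1)).eq_or_lt with hk1 | hk1
    · rw [hf.succ_eq_zero (k + 1) hk1.symm, ← hk1, mul_zero, mul_zero]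
    have hk : 0 < f k := (hf.nonneg k).lt_of_ne fun hk => hk1.ne' (hf.succ_eq_zero k hk.symm)
    -- multiply the inductive hypothesis by log-concavity at `k` and cancel `f k * f (k + 1)`
    refine le_of_mul_le_mul_right ?_ (mul_pos hk hk1)
    nlinarith [mul_le_mul ih (hf.mul_le_sq k) (mul_nonneg (hf.nonneg k) (hf.nonneg (k + 2)))
      (mul_nonneg (hf.nonneg (j + 1)) (hf.nonneg k))]

theorem mul_pow_le (hf : IsLogConcaveSeq f) (m q : ℕ) :
    f m * f (m + q + 1) ^ q ≤ f (m + q) ^ (q + 1) := by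
  induction q generalizing m with
  | zero => simp
  | succ q ih =>
    have ih' := ih (m + 1)
    rw [show m + 1 + q = m + (q + 1) by omega] at ih'
    have cross := hf.mul_succ_le (show m ≤ m + (q + 1) by omega)
    calc f m * f (m + (q + 1) + 1) ^ (q + 1)
        = (f m * f (m + (q + 1) + 1)) * f (m + (q + 1) + 1) ^ q := by ring
      _ ≤ (f (m + 1) * f (m + (q + 1))) * f (m + (q + 1) + 1) ^ q :=
          mul_le_mul_of_nonneg_right cross (pow_nonneg (hf.nonneg _) q)
      _ = f (m + (q + 1)) * (f (m + 1) * f (m + (q + 1) + 1) ^ q) := by ring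
      _ ≤ f (m + (q + 1)) * f (m + (q + 1)) ^ (q + 1) :=
          mul_le_mul_of_nonneg_left ih' (hf.nonneg _)
      _ = f (m + (q + 1)) ^ (q + 1 + 1) := by ring

theorem div_le_div_pow (hf : IsLogConcaveSeq f) {n p : ℕ} (hp : 1 ≤ p) (hpn : p ≤ n)
    (hn : 0 < f n) : f (n - p) / f n ≤ (f (n - 1) / f n) ^ p := by
  have h := hf.mul_pow_le (n - p) (p - 1)
  rw [show n - p + (p - 1) + 1 = n by omega, show n - p + (p - 1) = n - 1 by omega,
    show p - 1 + 1 = p by omega] at h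
  rw [div_pow, div_le_div_iff₀ hn (pow_pos hn p), ← Nat.sub_add_cancel hp, pow_succ,
    ← mul_assoc, Nat.sub_add_cancel hp]
  exact mul_le_mul_of_nonneg_right h hn.le

end IsLogConcaveSeq

namespace Multiset

theorem esymm_cons_succ {R : Type*} [CommSemiring R] (a : R) (s : Multiset R) (k : ℕ) :
    (a ::ₘ s).esymm (k + 1) = s.esymm (k + 1) + a * s.esymm k := by
  simp [esymm, powersetCard_cons, map_map, Function.comp, sum_map_mul_left]

theorem esymm_zero {R : Type*} [CommSemiring R] (s : Multiset R) : s.esymm 0 = 1 := by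
  simp [esymm]

variable {s : Multiset ℝ}

theorem esymm_nonneg (h : ∀ x ∈ s, 0 ≤ x) (k : ℕ) : 0 ≤ s.esymm k :=
  sum_nonneg fun _ hx => by
    obtain ⟨t, ht, rfl⟩ := mem_map.1 hx
    exact prod_nonneg fun y hy => h y (mem_of_le (mem_powersetCard.1 ht).1 hy)

theorem esymm_succ_le_esymm_one_mul (h : ∀ x ∈ s, 0 ≤ x) (k : ℕ) :
    s.esymm (k + 1) ≤ s.esymm 1 * s.esymm k := by
  induction s using Multiset.induction_on generalizing k with
  | empty => simp [esymm, powersetCard_zero_right]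
  | cons a s ih =>
    have ha : 0 ≤ a := h a (mem_cons_self a s)
    have hs : ∀ x ∈ s, 0 ≤ x := fun x hx => h x (mem_cons_of_mem hx)
    cases k with
    | zero => simp [esymm_zero]
    | succ k =>
      have := ih hs (k + 1)
      rw [esymm_cons_succ, esymm_cons_succ, esymm_cons_succ, esymm_zero]
      nlinarith [mul_nonneg ha (mul_nonneg (esymm_nonneg hs 1) (esymm_nonneg hs k)),
        mul_nonneg (mul_nonneg ha ha) (esymm_nonneg hs k)]

theorem esymm_succ_eq_zero (h : ∀ x ∈ s, 0 ≤ x) {k : ℕ} (hk : s.esymm k = 0) :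
    s.esymm (k + 1) = 0 :=
  le_antisymm (by simpa [hk] using esymm_succ_le_esymm_one_mul h k) (esymm_nonneg h _)

theorem esymm_mul_esymm_le_sq (h : ∀ x ∈ s, 0 ≤ x) (k : ℕ) :
    s.esymm k * s.esymm (k + 2) ≤ s.esymm (k + 1) ^ 2 := by
  induction s using Multiset.induction_on generalizing k with
  | empty => simp [esymm, powersetCard_zero_right]
  | cons a s ih =>
    have ha : 0 ≤ a := h a (mem_cons_self a s)
    have hs : ∀ x ∈ s, 0 ≤ x := fun x hx => h x (mem_cons_of_mem hx)
    have hlc : IsLogConcaveSeq s.esymm :=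
      ⟨esymm_nonneg hs, ih hs, fun _ => esymm_succ_eq_zero hs⟩
    cases k with
    | zero =>
      have := ih hs 0
      rw [esymm_zero, one_mul] at this ⊢
      rw [esymm_cons_succ, esymm_cons_succ, esymm_zero]
      nlinarith [esymm_nonneg hs 1]
    | succ m =>
      rw [esymm_cons_succ a s (m + 1), esymm_cons_succ a s (m + 2), esymm_cons_succ a s m]
      -- the coefficient of `a` is controlled by `E m * E (m + 3) ≤ E (m + 1) * E (m + 2)`
      nlinarith [mul_le_mul_of_nonneg_left (hlc.mul_succ_le (show m ≤ m + 2 by omega)) ha,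
        mul_le_mul_of_nonneg_left (ih hs m) (mul_nonneg ha ha), ih hs (m + 1)]

theorem isLogConcaveSeq_esymm (h : ∀ x ∈ s, 0 ≤ x) : IsLogConcaveSeq s.esymm :=
  ⟨esymm_nonneg h, esymm_mul_esymm_le_sq h, fun _ => esymm_succ_eq_zero h⟩

end Multiset

section esymmEval

variable {κ : ℕ}

theorem esymmEval_eq_esymm (x : Fin κ → ℝ) (j : ℕ) :
    esymmEval κ x j = (univ.val.map x).esymm j :=
  (esymm_map_val x univ j).symm

theorem esymmEval_div (x : Fin κ → ℝ) (c : ℝ) (j : ℕ) :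
    esymmEval κ (fun i => x i / c) j = esymmEval κ x j / c ^ j := by
  rw [esymmEval, esymmEval, sum_div]
  refine sum_congr rfl fun A hA => ?_
  rw [prod_div_distrib, prod_const, (mem_powersetCard.1 hA).2]

theorem esymmEval_pos {a : Fin κ → ℝ} (ha : ∀ i, 0 < a i) {j : ℕ} (hj : j ≤ κ) :
    0 < esymmEval κ a j := by
  obtain ⟨A, -, hA⟩ := exists_subset_card_eq (s := (univ : Finset (Fin κ))) (by simpa using hj)
  exact sum_pos (fun B _ => prod_pos fun i _ => ha i) ⟨A, mem_powersetCard.2 ⟨subset_univ A, hA⟩⟩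

theorem isLogConcaveSeq_esymmEval {a : Fin κ → ℝ} (ha : ∀ i, 0 ≤ a i) :
    IsLogConcaveSeq (esymmEval κ a) := by
  rw [show esymmEval κ a = (univ.val.map a).esymm from funext (esymmEval_eq_esymm a)]
  exact Multiset.isLogConcaveSeq_esymm (by simpa using ha)

end esymmEval

/-- With `Ĩ_p = Ĩ_n · s_{n-p}(a_1/(2nμ), ..., a_κ/(2nμ))`, the Fujiwara bound
`λ̃ = 2 max_{1 ≤ p ≤ n} (Ĩ_p/Ĩ_0)^(1/p)` equals `4nμ · s_{n-1}(a)/s_n(a)`. -/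
theorem fujiwara_bound_value (κ n : ℕ) (hn : 1 ≤ n) (hnκ : n ≤ κ)
    (a : Fin κ → ℝ) (ha : ∀ i, 0 < a i)
    (μ : ℝ) (hμ : μ = ∑ i : Fin κ, (i.1 + 1 : ℝ) * a i)
    (ItildeN : ℝ) (hIN : 0 < ItildeN)
    (Itilde : ℕ → ℝ)
    (hItilde : ∀ p, Itilde p =
      ItildeN * esymmEval κ (fun i => a i / (2 * n * μ)) (n - p)) :
    2 * (Finset.Icc 1 n).sup' (Finset.nonempty_Icc.mpr hn)
        (fun p => (Itilde p / Itilde 0) ^ ((p : ℝ)⁻¹)) =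
      4 * n * μ * (esymmEval κ a (n - 1) / esymmEval κ a n) := by
  have : Nonempty (Fin κ) := ⟨⟨0, by omega⟩⟩
  have hμ0 : 0 < μ := hμ ▸ sum_pos (fun i _ => mul_pos (by positivity) (ha i)) univ_nonempty
  set c : ℝ := 2 * n * μ
  have hc : 0 < c := by positivity
  set r : ℕ → ℝ := fun p => esymmEval κ a (n - p) / esymmEval κ a n
  have hsn : 0 < esymmEval κ a n := esymmEval_pos ha hnκ
  have hlc := isLogConcaveSeq_esymmEval fun i => (ha i).le
  have hr : ∀ p, 0 ≤ r p := fun p => div_nonneg (hlc.nonneg _) hsn.le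
  have hratio : ∀ p ≤ n, Itilde p / Itilde 0 = c ^ p * r p := fun p hp => by
    have hcn : c ^ n = c ^ (n - p) * c ^ p := by rw [← pow_add, Nat.sub_add_cancel hp]
    rw [hItilde, hItilde, esymmEval_div, esymmEval_div, Nat.sub_zero, hcn]
    simp only [r]
    field_simp
  have hle : ∀ p ∈ Icc 1 n, (Itilde p / Itilde 0) ^ ((p : ℝ)⁻¹) ≤ c * r 1 := fun p hp => by
    obtain ⟨hp1, hpn⟩ := mem_Icc.1 hp
    rw [hratio p hpn, Real.rpow_inv_le_iff_of_pos (mul_nonneg (pow_nonneg hc.le p) (hr p))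
      (mul_nonneg hc.le (hr 1)) (Nat.cast_pos.mpr hp1), Real.rpow_natCast, mul_pow c]
    exact mul_le_mul_of_nonneg_left (hlc.div_le_div_pow hp1 hpn hsn) (pow_nonneg hc.le p)
  have hsup : (Icc 1 n).sup' (nonempty_Icc.mpr hn)
      (fun p => (Itilde p / Itilde 0) ^ ((p : ℝ)⁻¹)) = c * r 1 :=
    le_antisymm (sup'_le _ _ hle) <|
      le_sup'_of_le _ (mem_Icc.2 ⟨le_rfl, hn⟩) (by simp [hratio 1 hn])
  rw [hsup]
  ring
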